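/- arXiv:0806.1030 — 3 statements merged into one kernel-verified Lean document; each statement's English description precedes it below -/
import Mathlib

section
/- Let X₁, X₂, … be i.i.d. real random variables and S_ℓ = X₁ + ⋯ + X_ℓ. For any m ≥ 1 and any c > 0, P[S_m ≥ c and S_ℓ ≥ 0 for all ℓ = 1,…,m] ≥ (1/m) · P[S_m ≥ c]. -/
/-!
If `S_m ≥ c > 0`, some cyclic rotation of `(X₁, …, X_m)` has all its partial sums
nonnegative (the cycle lemma). So `{S_m ≥ c}` is covered by the `m` events "the `k`-th rotation
has sum `≥ c` and nonnegative partial sums", and since the i.i.d. law of the vector is invariant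
under rotations, each of them has the probability of the unrotated one.
-/

open MeasureTheory ProbabilityTheory Finset
-- A natural number `i` used as an index in `Fin m` is read modulo `m`: this makes `i + k` cyclic.
open Fin.NatCast

section CycleLemma

variable {α : Type*} [AddCommGroup α] [LinearOrder α] [IsOrderedAddMonoid α]

/-- Take `k` minimising the partial sums over one period: periodicity and a nonnegative period
sum make it a global minimiser. -/
theorem Function.Periodic.exists_forall_sum_range_add_nonneg {f : ℕ → α} {m : ℕ}
    (hf : Function.Periodic f m) (hm : 0 < m) (hsum : 0 ≤ ∑ i ∈ range m, f i) :
    ∃ k < m, ∀ ℓ, 0 ≤ ∑ i ∈ range ℓ, f (k + i) := by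
  set S : ℕ → α := fun n ↦ ∑ i ∈ range n, f i
  obtain ⟨k, hk, hkmin⟩ := exists_min_image (range m) S ⟨0, mem_range.2 hm⟩
  have hglobal : ∀ n, S k ≤ S n := by
    intro n
    induction n using Nat.strong_induction_on with
    | _ n ih =>
      rcases lt_or_ge n m with hn | hn
      · exact hkmin n (mem_range.2 hn)
      · obtain ⟨t, rfl⟩ := Nat.exists_eq_add_of_le hn
        have hsplit : S (m + t) = S m + S t := by
          simp only [S, sum_range_add]
          exact congrArg _ (sum_congr rfl fun i _ ↦ by rw [add_comm, hf])
        rw [hsplit]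
        exact (ih t (by omega)).trans (le_add_of_nonneg_left hsum)
  refine ⟨k, mem_range.1 hk, fun ℓ ↦ ?_⟩
  have := hglobal (k + ℓ)
  simp only [S, sum_range_add] at this
  exact (le_add_iff_nonneg_right _).1 this

theorem Fin.exists_forall_sum_range_add_nonneg {m : ℕ} [NeZero m] (y : Fin m → α)
    (hy : 0 ≤ ∑ i, y i) : ∃ k : Fin m, ∀ ℓ, 0 ≤ ∑ i ∈ range ℓ, y (i + k) := by
  have hperiodic : Function.Periodic (fun n : ℕ ↦ y n) m := fun n ↦ by simp
  have hsum : ∑ i, y i = ∑ i ∈ range m, y i := by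
    simpa using Fin.sum_univ_eq_sum_range (fun n : ℕ ↦ y n) m
  obtain ⟨k, -, hk⟩ :=
    hperiodic.exists_forall_sum_range_add_nonneg (NeZero.pos m) (hsum ▸ hy)
  exact ⟨k, fun ℓ ↦ by simpa [add_comm] using hk ℓ⟩

end CycleLemma

theorem measurePreserving_pi_comp_perm {ι β : Type*} [Fintype ι] [MeasurableSpace β]
    (ν : Measure β) [SigmaFinite ν] (σ : Equiv.Perm ι) :
    MeasurePreserving (fun y : ι → β ↦ y ∘ σ)
      (Measure.pi fun _ ↦ ν) (Measure.pi fun _ ↦ ν) := by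
  convert measurePreserving_piCongrLeft (fun _ ↦ ν) σ.symm using 1
  ext y i
  simp [MeasurableEquiv.coe_piCongrLeft, Equiv.piCongrLeft_apply_eq_cast]

theorem measure_le_card_mul_of_subset_iUnion_preimage {β ι : Type*} [MeasurableSpace β]
    [Fintype ι] {P : Measure β} {T : ι → β → β} (hT : ∀ k, MeasurePreserving (T k) P P)
    {B C : Set β} (hB : NullMeasurableSet B P) (hC : C ⊆ ⋃ k, T k ⁻¹' B) :
    P C ≤ Fintype.card ι * P B :=
  calc P C ≤ ∑ k, P (T k ⁻¹' B) := (measure_mono hC).trans (measure_iUnion_fintype_le _ _)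
    _ = Fintype.card ι * P B := by simp [(hT _).measure_preimage hB]

theorem measurableSet_sum_ge_and_partialSums_nonneg (m : ℕ) [NeZero m] (c : ℝ) :
    MeasurableSet {y : Fin m → ℝ | c ≤ ∑ i, y i ∧ ∀ ℓ, 0 ≤ ∑ i ∈ range ℓ, y i} := by
  simp only [Set.ofPred_and, Set.ofPred_forall]
  exact (measurableSet_le (by fun_prop) (by fun_prop)).inter
    (.iInter fun ℓ ↦ measurableSet_le (by fun_prop) (by fun_prop))

theorem measure_sum_ge_le_mul_measure_partialSums_nonneg {m : ℕ} [NeZero m]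
    {P : Measure (Fin m → ℝ)}
    (hP : ∀ k : Fin m, MeasurePreserving (fun y ↦ y ∘ Equiv.addRight k) P P) {c : ℝ} (hc : 0 < c) :
    P {y | c ≤ ∑ i, y i} ≤ m * P {y | c ≤ ∑ i, y i ∧ ∀ ℓ, 0 ≤ ∑ i ∈ range ℓ, y i} := by
  have hcover : {y : Fin m → ℝ | c ≤ ∑ i, y i} ⊆
      ⋃ k : Fin m, (fun y ↦ y ∘ Equiv.addRight k) ⁻¹'
        {y | c ≤ ∑ i, y i ∧ ∀ ℓ, 0 ≤ ∑ i ∈ range ℓ, y i} := fun y hy ↦ by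
    obtain ⟨k, hk⟩ := Fin.exists_forall_sum_range_add_nonneg y (hc.le.trans hy)
    exact Set.mem_iUnion.2 ⟨k, hy.trans_eq (Equiv.sum_comp (Equiv.addRight k) y).symm, hk⟩
  simpa using measure_le_card_mul_of_subset_iUnion_preimage hP
    (measurableSet_sum_ge_and_partialSums_nonneg m c).nullMeasurableSet hcover

/-- for i.i.d. real random variables with partial sums `S_ℓ`, for `m ≥ 1`
and `c > 0`, `P[S_m ≥ c, S_ℓ ≥ 0 ∀ ℓ = 1,…,m] ≥ (1/m) P[S_m ≥ c]`. -/
theorem stmt3 {Ω : Type*} [MeasurableSpace Ω] (μ : Measure Ω) [IsProbabilityMeasure μ]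
    (X : ℕ → Ω → ℝ) (hmeas : ∀ i, Measurable (X i))
    (hindep : iIndepFun X μ)
    (hident : ∀ i, Measure.map (X i) μ = Measure.map (X 0) μ)
    (m : ℕ) (hm : 1 ≤ m) (c : ℝ) (hc : 0 < c) :
    (m : ENNReal)⁻¹ * μ {ω | c ≤ ∑ i ∈ Finset.range m, X i ω} ≤
      μ {ω | c ≤ (∑ i ∈ Finset.range m, X i ω) ∧
              ∀ ℓ, 1 ≤ ℓ → ℓ ≤ m → 0 ≤ ∑ i ∈ Finset.range ℓ, X i ω} := by
  have : NeZero m := ⟨by omega⟩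
  set V : Ω → Fin m → ℝ := fun ω i ↦ X i ω
  have hV : Measurable V := by fun_prop
  have hlaw : μ.map V = Measure.pi fun _ ↦ μ.map (X 0) := by
    rw [(hindep.precomp Fin.val_injective).map_fun_eq_pi_map
      fun i : Fin m ↦ (hmeas i).aemeasurable]
    simp only [hident]
  have : IsProbabilityMeasure (μ.map (X 0)) :=
    Measure.isProbabilityMeasure_map (hmeas 0).aemeasurable
  have hcount := measure_sum_ge_le_mul_measure_partialSums_nonneg (P := μ.map V)
    (fun k ↦ hlaw ▸ measurePreserving_pi_comp_perm _ _) hc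
  have hsum (ω) : ∑ i, V ω i = ∑ i ∈ range m, X i ω := Fin.sum_univ_eq_sum_range (X · ω) m
  calc (m : ENNReal)⁻¹ * μ {ω | c ≤ ∑ i ∈ range m, X i ω}
      ≤ (m : ENNReal)⁻¹ * μ.map V {y | c ≤ ∑ i, y i} := by
        gcongr
        simpa [hsum] using Measure.le_map_apply hV.aemeasurable {y : Fin m → ℝ | c ≤ ∑ i, y i}
    _ ≤ μ.map V {y | c ≤ ∑ i, y i ∧ ∀ ℓ, 0 ≤ ∑ i ∈ range ℓ, y i} := by
        grw [hcount, ENNReal.inv_mul_cancel_left (by simp [NeZero.ne m]) (by simp)]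
    _ ≤ _ := by
        rw [Measure.map_apply hV (measurableSet_sum_ge_and_partialSums_nonneg m c)]
        refine measure_mono fun ω ⟨hω, hpartial⟩ ↦ ⟨hω.trans_eq (hsum ω), fun ℓ _ hℓ ↦ ?_⟩
        refine (hpartial ℓ).trans_eq (sum_congr rfl fun i hi ↦ ?_)
        simp [V, Nat.mod_eq_of_lt ((mem_range.1 hi).trans_le hℓ)]
end

section
/- Variational identity for the annealed exponent: let ρ be a positive random variable, 0 < p < 1, and suppose κ_r > 0 satisfies E[ρ^{κ_r}] = 1/(1-p) and E[ρ^{κ_r} ln ρ] ∈ (0, ∞). Then for every h > 0, inf_{b>0} sup_{λ>0} { λ h − b · ln( (1-p) E[ρ^λ] ) } = κ_r · h. -/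
open MeasureTheory

/-!
`λ ↦ ln E[ρ^λ]` is convex, so `ln((1-p) E[ρ^λ])` lies above its tangent line `(λ - κ_r) s` at
`κ_r`, where `s = (1-p) E[ρ^{κ_r} ln ρ] > 0`. At `λ = κ_r` the bracket equals `κ_r h` whatever
`b` is, which gives `≥`; for `b = h / s` the tangent bound keeps the bracket below `κ_r h` for
every `λ`, which gives `≤`.
-/

/-- `1 + y ≤ e^y` at `y = (l - κ) ln x - c`, scaled by `x^κ e^c`; integrated, it gives the
tangent line of `λ ↦ ln ∫ ρ^λ` at `κ` (choosing `c` as its slope times `l - κ`). -/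
lemma Real.exp_mul_tangent_le_rpow {x : ℝ} (hx : 0 < x) (κ l c : ℝ) :
    Real.exp c * ((1 - c) * x ^ κ + (l - κ) * (x ^ κ * Real.log x)) ≤ x ^ l := by
  have hsplit : x ^ l = x ^ κ * Real.exp c * Real.exp ((l - κ) * Real.log x - c) := by
    rw [mul_assoc, ← Real.exp_add, Real.rpow_def_of_pos hx, Real.rpow_def_of_pos hx,
      ← Real.exp_add]
    ring_nf
  calc Real.exp c * ((1 - c) * x ^ κ + (l - κ) * (x ^ κ * Real.log x))
      = x ^ κ * Real.exp c * ((l - κ) * Real.log x - c + 1) := by ring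
    _ ≤ x ^ κ * Real.exp c * Real.exp ((l - κ) * Real.log x - c) := by
        gcongr
        exact Real.add_one_le_exp _
    _ = x ^ l := hsplit.symm

lemma integral_rpow_ge_mul_exp_tangent {Ω : Type*} [MeasurableSpace Ω] {μ : Measure Ω}
    {ρ : Ω → ℝ} (hpos : ∀ ω, 0 < ρ ω) {κ l : ℝ}
    (hκ : Integrable (fun ω => ρ ω ^ κ) μ)
    (hder : Integrable (fun ω => ρ ω ^ κ * Real.log (ρ ω)) μ)
    (hl : Integrable (fun ω => ρ ω ^ l) μ) (hM : 0 < ∫ ω, ρ ω ^ κ ∂μ) :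
    (∫ ω, ρ ω ^ κ ∂μ) * Real.exp ((l - κ) * (∫ ω, ρ ω ^ κ * Real.log (ρ ω) ∂μ) / ∫ ω, ρ ω ^ κ ∂μ)
      ≤ ∫ ω, ρ ω ^ l ∂μ := by
  set M := ∫ ω, ρ ω ^ κ ∂μ
  set D := ∫ ω, ρ ω ^ κ * Real.log (ρ ω) ∂μ
  set c := (l - κ) * D / M with hc
  have hlower := ((hκ.const_mul (1 - c)).add (hder.const_mul (l - κ))).const_mul (Real.exp c)
  calc M * Real.exp c = Real.exp c * ((1 - c) * M + (l - κ) * D) := by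
        rw [hc]
        field_simp
        ring
    _ = ∫ ω, Real.exp c * ((1 - c) * ρ ω ^ κ + (l - κ) * (ρ ω ^ κ * Real.log (ρ ω))) ∂μ := by
        rw [integral_const_mul, integral_add (hκ.const_mul _) (hder.const_mul _),
          integral_const_mul, integral_const_mul]
    _ ≤ ∫ ω, ρ ω ^ l ∂μ :=
        integral_mono hlower hl fun ω => Real.exp_mul_tangent_le_rpow (hpos ω) κ l c

lemma iInf_iSup_pos_eq_of_saddle {f : ℝ → ℝ → ℝ} {c κ b₀ : ℝ} (hκ : 0 < κ) (hb₀ : 0 < b₀)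
    (hrow : ∀ b, 0 < b → f b κ = c) (hcol : ∀ l, 0 < l → f b₀ l ≤ c) :
    (⨅ (b : ℝ) (_ : 0 < b), ⨆ (l : ℝ) (_ : 0 < l), (f b l : EReal)) = (c : EReal) := by
  apply le_antisymm
  · exact iInf₂_le_of_le b₀ hb₀ <| iSup₂_le fun l hl => EReal.coe_le_coe_iff.mpr (hcol l hl)
  · exact le_iInf₂ fun b hb => le_iSup₂_of_le κ hκ (EReal.coe_le_coe_iff.mpr (hrow b hb).ge)

theorem stmt5_general {Ω : Type*} [MeasurableSpace Ω] (μ : Measure Ω)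
    (ρ : Ω → ℝ) (hpos : ∀ ω, 0 < ρ ω)
    (p : ℝ) (hp1 : p < 1)
    (hint : ∀ l : ℝ, 0 ≤ l → Integrable (fun ω => ρ ω ^ l) μ)
    (κr : ℝ) (hκr : 0 < κr)
    (hmom : (∫ ω, ρ ω ^ κr ∂μ) = 1 / (1 - p))
    (hderint : Integrable (fun ω => ρ ω ^ κr * Real.log (ρ ω)) μ)
    (hderpos : 0 < ∫ ω, ρ ω ^ κr * Real.log (ρ ω) ∂μ)
    (h : ℝ) (hh : 0 < h) :
    (⨅ (b : ℝ) (_ : 0 < b), ⨆ (l : ℝ) (_ : 0 < l),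
        ((l * h - b * Real.log ((1 - p) * ∫ ω, ρ ω ^ l ∂μ) : ℝ) : EReal)) =
      ((κr * h : ℝ) : EReal) := by
  have h1p : 0 < 1 - p := by linarith
  set D := ∫ ω, ρ ω ^ κr * Real.log (ρ ω) ∂μ
  have hslope : 0 < (1 - p) * D := mul_pos h1p hderpos
  have htangent : ∀ l, 0 < l →
      (l - κr) * ((1 - p) * D) ≤ Real.log ((1 - p) * ∫ ω, ρ ω ^ l ∂μ) := by
    intro l hl
    have hge := integral_rpow_ge_mul_exp_tangent hpos (hint κr hκr.le) hderint (hint l hl.le)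
      (by rw [hmom]; positivity)
    have hexponent : (l - κr) * D / (1 / (1 - p)) = (l - κr) * ((1 - p) * D) := by
      field_simp
    rw [hmom, hexponent, one_div, inv_mul_le_iff₀ h1p] at hge
    exact (Real.le_log_iff_exp_le (lt_of_lt_of_le (Real.exp_pos _) hge)).mpr hge
  refine iInf_iSup_pos_eq_of_saddle hκr (div_pos hh hslope) (fun b _ => ?_) fun l hl => ?_
  · rw [hmom, mul_one_div_cancel h1p.ne', Real.log_one, mul_zero, sub_zero]
  · have hbound := mul_le_mul_of_nonneg_left (htangent l hl) (div_pos hh hslope).le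
    have hcancel : h / ((1 - p) * D) * ((l - κr) * ((1 - p) * D)) = (l - κr) * h := by
      field_simp
    linarith

/-- variational identity for the annealed exponent: if `κ_r > 0` satisfies
`E[ρ^{κ_r}] = 1/(1-p)` and `E[ρ^{κ_r} ln ρ] ∈ (0,∞)`, then for every `h > 0`,
`inf_{b>0} sup_{λ>0} { λh − b ln((1-p) E[ρ^λ]) } = κ_r h` (in the extended reals). -/
theorem stmt5 {Ω : Type*} [MeasurableSpace Ω] (μ : Measure Ω) [IsProbabilityMeasure μ]
    (ρ : Ω → ℝ) (hmeas : Measurable ρ) (hpos : ∀ ω, 0 < ρ ω)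
    (p : ℝ) (hp0 : 0 < p) (hp1 : p < 1)
    (hint : ∀ l : ℝ, 0 ≤ l → Integrable (fun ω => ρ ω ^ l) μ)
    (κr : ℝ) (hκr : 0 < κr)
    (hmom : (∫ ω, ρ ω ^ κr ∂μ) = 1 / (1 - p))
    (hderint : Integrable (fun ω => ρ ω ^ κr * Real.log (ρ ω)) μ)
    (hderpos : 0 < ∫ ω, ρ ω ^ κr * Real.log (ρ ω) ∂μ)
    (h : ℝ) (hh : 0 < h) :
    (⨅ (b : ℝ) (_ : 0 < b), ⨆ (l : ℝ) (_ : 0 < l),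
        ((l * h - b * Real.log ((1 - p) * ∫ ω, ρ ω ^ l ∂μ) : ℝ) : EReal)) =
      ((κr * h : ℝ) : EReal) :=
  stmt5_general μ ρ hpos p hp1 hint κr hκr hmom hderint hderpos h hh
end

section
/- Under the assumptions of the previous statement for both ρ and 1/ρ, with κ_ℓ > 0 satisfying E[ρ^{−κ_ℓ}] = 1/(1−p) and κ_r satisfying E[ρ^{κ_r}] = 1/(1−p), the function ψ̃(h) := inf_{b₁,b₂>0} { −(b₁+b₂) ln(1−p) + sup_{λ>0}{λh − b₂ ln E[ρ^λ]} + sup_{λ>0}{λh − b₁ ln E[ρ^{−λ}]} } satisfies ψ̃(h) = (κ_ℓ + κ_r) h for all h > 0. -/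
/-!
Both moment functions `λ ↦ log E[ρ^λ]` and `λ ↦ log E[ρ^{-λ}]` lie above their tangent lines at
`κ_r` (resp. `κ_ℓ`), by integrating `1 + y ≤ e^y`; the slope `d = E[ρ^κ log ρ] / E[ρ^κ]` is
positive. Choosing `b = h / d` makes
`λ h - b log E[ρ^{±λ}]` maximal at `λ = κ`, and the moment condition `log E[ρ^{±κ}] = -log(1-p)`
cancels the linear term in `b`, so `κ h` is attained. Conversely, evaluating the supremum at
`λ = κ` shows that `κ h` is a lower bound for every `b`. The infimum over `(b₁, b₂)` splits into
these two one-parameter problems.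
-/

open MeasureTheory Set

lemma exp_mul_rpow_mul_le_rpow {x : ℝ} (hx : 0 < x) (κ l d : ℝ) :
    Real.exp ((l - κ) * d) * (x ^ κ * (1 + (l - κ) * (Real.log x - d))) ≤ x ^ l := by
  rw [Real.rpow_def_of_pos hx, Real.rpow_def_of_pos hx]
  calc Real.exp ((l - κ) * d) * (Real.exp (Real.log x * κ) * (1 + (l - κ) * (Real.log x - d)))
      ≤ Real.exp ((l - κ) * d) * (Real.exp (Real.log x * κ) *
          Real.exp ((l - κ) * (Real.log x - d))) := by
        gcongr
        linarith [Real.add_one_le_exp ((l - κ) * (Real.log x - d))]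
    _ = Real.exp (Real.log x * l) := by
        rw [← Real.exp_add, ← Real.exp_add]
        ring_nf

section Tangent

variable {Ω : Type*} [MeasurableSpace Ω] {μ : Measure Ω} {f : Ω → ℝ} {κ : ℝ}

theorem tangent_le_log_integral_rpow (hf : ∀ ω, 0 < f ω) (l : ℝ)
    (hκ : Integrable (fun ω => f ω ^ κ) μ) (hl : Integrable (fun ω => f ω ^ l) μ)
    (hlog : Integrable (fun ω => f ω ^ κ * Real.log (f ω)) μ) (hM : 0 < ∫ ω, f ω ^ κ ∂μ) :
    Real.log (∫ ω, f ω ^ κ ∂μ) +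
        (l - κ) * ((∫ ω, f ω ^ κ * Real.log (f ω) ∂μ) / ∫ ω, f ω ^ κ ∂μ) ≤
      Real.log (∫ ω, f ω ^ l ∂μ) := by
  set M := ∫ ω, f ω ^ κ ∂μ
  set I := ∫ ω, f ω ^ κ * Real.log (f ω) ∂μ
  set d := I / M
  have hdM : d * M = I := div_mul_cancel₀ _ hM.ne'
  clear_value d
  have hpt : ∀ ω, Real.exp ((l - κ) * d) *
      ((1 - (l - κ) * d) * f ω ^ κ + (l - κ) * (f ω ^ κ * Real.log (f ω))) ≤ f ω ^ l :=
    fun ω => by convert exp_mul_rpow_mul_le_rpow (hf ω) κ l d using 2; ring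
  have hmono := integral_mono (((hκ.const_mul _).add (hlog.const_mul _)).const_mul _) hl hpt
  simp only [Pi.add_apply] at hmono
  rw [integral_const_mul, integral_add (hκ.const_mul _) (hlog.const_mul _), integral_const_mul,
    integral_const_mul, show (1 - (l - κ) * d) * M + (l - κ) * I = M by
      linear_combination (κ - l) * hdM] at hmono
  have := Real.log_le_log (by positivity) hmono
  rwa [Real.log_mul (Real.exp_pos _).ne' hM.ne', Real.log_exp, add_comm] at this

theorem tangent_le_log_integral_rpow_neg (hf : ∀ ω, 0 < f ω) (l : ℝ)
    (hκ : Integrable (fun ω => f ω ^ (-κ)) μ) (hl : Integrable (fun ω => f ω ^ (-l)) μ)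
    (hlog : Integrable (fun ω => f ω ^ (-κ) * Real.log (1 / f ω)) μ)
    (hM : 0 < ∫ ω, f ω ^ (-κ) ∂μ) :
    Real.log (∫ ω, f ω ^ (-κ) ∂μ) +
        (l - κ) * ((∫ ω, f ω ^ (-κ) * Real.log (1 / f ω) ∂μ) / ∫ ω, f ω ^ (-κ) ∂μ) ≤
      Real.log (∫ ω, f ω ^ (-l) ∂μ) := by
  have hinv : ∀ ω (t : ℝ), (f ω)⁻¹ ^ t = f ω ^ (-t) := fun ω t => by
    rw [Real.inv_rpow (hf ω).le, Real.rpow_neg (hf ω).le]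
  simp only [one_div] at hlog ⊢
  simpa only [hinv] using tangent_le_log_integral_rpow (μ := μ) (f := fun ω => (f ω)⁻¹) (κ := κ)
    (fun ω => inv_pos.2 (hf ω)) l (by simpa only [hinv]) (by simpa only [hinv])
    (by simpa only [hinv]) (by simpa only [hinv])

end Tangent

theorem iSup_mul_sub_div_mul_eq_of_tangent {Λ : ℝ → ℝ} {κ d h : ℝ} (hκ : 0 < κ) (hd : 0 < d)
    (hh : 0 ≤ h) (htan : ∀ l, 0 < l → Λ κ + (l - κ) * d ≤ Λ l) :
    ⨆ (l : ℝ) (_ : 0 < l), ((l * h - h / d * Λ l : ℝ) : EReal) =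
      ((κ * h - h / d * Λ κ : ℝ) : EReal) := by
  refine le_antisymm (iSup₂_le fun l hl => EReal.coe_le_coe_iff.2 ?_) (le_iSup₂_of_le κ hκ le_rfl)
  have hscaled := mul_le_mul_of_nonneg_left (htan l hl) (div_nonneg hh hd.le)
  have hbd : h / d * d = h := div_mul_cancel₀ h hd.ne'
  linear_combination hscaled - (l - κ) * hbd

theorem isLeast_mul_add_iSup_mul_sub {Λ : ℝ → ℝ} {κ d h : ℝ} (hκ : 0 < κ) (hd : 0 < d)
    (hh : 0 < h) (htan : ∀ l, 0 < l → Λ κ + (l - κ) * d ≤ Λ l) :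
    IsLeast ((fun b => ((b * Λ κ : ℝ) : EReal) +
        ⨆ (l : ℝ) (_ : 0 < l), ((l * h - b * Λ l : ℝ) : EReal)) '' Ioi 0) ((κ * h : ℝ) : EReal) := by
  refine ⟨⟨h / d, div_pos hh hd, ?_⟩, ?_⟩
  · dsimp only
    rw [iSup_mul_sub_div_mul_eq_of_tangent hκ hd hh.le htan, ← EReal.coe_add]
    ring_nf
  · rintro _ ⟨b, -, rfl⟩
    calc ((κ * h : ℝ) : EReal) = ((b * Λ κ : ℝ) : EReal) + ((κ * h - b * Λ κ : ℝ) : EReal) := by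
          rw [← EReal.coe_add]; ring_nf
      _ ≤ _ := add_le_add le_rfl (le_iSup₂_of_le κ hκ le_rfl)

theorem iInf_iInf_add_eq_of_isLeast {ι ι' α : Type*} [CompleteLinearOrder α] [AddCommMonoid α]
    [IsOrderedAddMonoid α] {S : Set ι} {T : Set ι'} {A : ι → α} {B : ι' → α} {a b : α}
    (hA : IsLeast (A '' S) a) (hB : IsLeast (B '' T) b) :
    ⨅ s ∈ S, ⨅ t ∈ T, A s + B t = a + b := by
  obtain ⟨⟨x, hx, rfl⟩, hAlow⟩ := hA
  obtain ⟨⟨y, hy, rfl⟩, hBlow⟩ := hB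
  refine le_antisymm ((iInf₂_le x hx).trans (iInf₂_le y hy)) ?_
  exact le_iInf₂ fun s hs => le_iInf₂ fun t ht =>
    add_le_add (hAlow ⟨s, hs, rfl⟩) (hBlow ⟨t, ht, rfl⟩)

theorem stmt6_general {Ω : Type*} [MeasurableSpace Ω] (μ : Measure Ω)
    (ρ : Ω → ℝ) (hpos : ∀ ω, 0 < ρ ω) (p : ℝ) (hp1 : p < 1)
    (hintr : ∀ l : ℝ, 0 ≤ l → Integrable (fun ω => ρ ω ^ l) μ)
    (hintl : ∀ l : ℝ, 0 ≤ l → Integrable (fun ω => ρ ω ^ (-l)) μ)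
    (κℓ κr : ℝ) (hκℓ : 0 < κℓ) (hκr : 0 < κr)
    (hmomr : (∫ ω, ρ ω ^ κr ∂μ) = 1 / (1 - p))
    (hmoml : (∫ ω, ρ ω ^ (-κℓ) ∂μ) = 1 / (1 - p))
    (hderintr : Integrable (fun ω => ρ ω ^ κr * Real.log (ρ ω)) μ)
    (hderposr : 0 < ∫ ω, ρ ω ^ κr * Real.log (ρ ω) ∂μ)
    (hderintl : Integrable (fun ω => ρ ω ^ (-κℓ) * Real.log (1 / ρ ω)) μ)
    (hderposl : 0 < ∫ ω, ρ ω ^ (-κℓ) * Real.log (1 / ρ ω) ∂μ)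
    (h : ℝ) (hh : 0 < h) :
    (⨅ (b₁ : ℝ) (_ : 0 < b₁), ⨅ (b₂ : ℝ) (_ : 0 < b₂),
        (((-(b₁ + b₂) * Real.log (1 - p) : ℝ) : EReal) +
          (⨆ (l : ℝ) (_ : 0 < l),
            ((l * h - b₂ * Real.log (∫ ω, ρ ω ^ l ∂μ) : ℝ) : EReal)) +
          (⨆ (l : ℝ) (_ : 0 < l),
            ((l * h - b₁ * Real.log (∫ ω, ρ ω ^ (-l) ∂μ) : ℝ) : EReal)))) =
      (((κℓ + κr) * h : ℝ) : EReal) := by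
  have hc : Real.log (1 / (1 - p)) = -Real.log (1 - p) := by rw [one_div, Real.log_inv]
  have hM : (0 : ℝ) < 1 / (1 - p) := one_div_pos.2 (sub_pos.2 hp1)
  have hright := isLeast_mul_add_iSup_mul_sub (Λ := fun l => Real.log (∫ ω, ρ ω ^ l ∂μ)) hκr
    (div_pos hderposr (hmomr ▸ hM)) hh fun l hl => tangent_le_log_integral_rpow hpos l
      (hintr κr hκr.le) (hintr l hl.le) hderintr (hmomr ▸ hM)
  have hleft := isLeast_mul_add_iSup_mul_sub (Λ := fun l => Real.log (∫ ω, ρ ω ^ (-l) ∂μ)) hκℓ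
    (div_pos hderposl (hmoml ▸ hM)) hh fun l hl => tangent_le_log_integral_rpow_neg hpos l
      (hintl κℓ hκℓ.le) (hintl l hl.le) hderintl (hmoml ▸ hM)
  simp only [hmomr, hmoml, hc] at hright hleft
  rw [add_mul, EReal.coe_add, ← iInf_iInf_add_eq_of_isLeast hleft hright]
  refine iInf_congr fun b₁ => iInf_congr fun _ => iInf_congr fun b₂ => iInf_congr fun _ => ?_
  rw [show -(b₁ + b₂) * Real.log (1 - p) = b₁ * -Real.log (1 - p) + b₂ * -Real.log (1 - p) by
    ring, EReal.coe_add]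
  abel

/-- with `κ_ℓ, κ_r > 0` satisfying `E[ρ^{−κ_ℓ}] = E[ρ^{κ_r}] = 1/(1−p)`
(together with positivity and finiteness of the corresponding logarithmic moments),
the rate function
`ψ̃(h) = inf_{b₁,b₂>0} { −(b₁+b₂)ln(1−p) + sup_{λ>0}{λh − b₂ ln E[ρ^λ]}
+ sup_{λ>0}{λh − b₁ ln E[ρ^{−λ}]} }` equals `(κ_ℓ + κ_r) h` for all `h > 0`. -/
theorem stmt6 {Ω : Type*} [MeasurableSpace Ω] (μ : Measure Ω) [IsProbabilityMeasure μ]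
    (ρ : Ω → ℝ) (hmeas : Measurable ρ) (hpos : ∀ ω, 0 < ρ ω)
    (p : ℝ) (hp0 : 0 < p) (hp1 : p < 1)
    (hintr : ∀ l : ℝ, 0 ≤ l → Integrable (fun ω => ρ ω ^ l) μ)
    (hintl : ∀ l : ℝ, 0 ≤ l → Integrable (fun ω => ρ ω ^ (-l)) μ)
    (κℓ κr : ℝ) (hκℓ : 0 < κℓ) (hκr : 0 < κr)
    (hmomr : (∫ ω, ρ ω ^ κr ∂μ) = 1 / (1 - p))
    (hmoml : (∫ ω, ρ ω ^ (-κℓ) ∂μ) = 1 / (1 - p))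
    (hderintr : Integrable (fun ω => ρ ω ^ κr * Real.log (ρ ω)) μ)
    (hderposr : 0 < ∫ ω, ρ ω ^ κr * Real.log (ρ ω) ∂μ)
    (hderintl : Integrable (fun ω => ρ ω ^ (-κℓ) * Real.log (1 / ρ ω)) μ)
    (hderposl : 0 < ∫ ω, ρ ω ^ (-κℓ) * Real.log (1 / ρ ω) ∂μ)
    (h : ℝ) (hh : 0 < h) :
    (⨅ (b₁ : ℝ) (_ : 0 < b₁), ⨅ (b₂ : ℝ) (_ : 0 < b₂),
        (((-(b₁ + b₂) * Real.log (1 - p) : ℝ) : EReal) +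
          (⨆ (l : ℝ) (_ : 0 < l),
            ((l * h - b₂ * Real.log (∫ ω, ρ ω ^ l ∂μ) : ℝ) : EReal)) +
          (⨆ (l : ℝ) (_ : 0 < l),
            ((l * h - b₁ * Real.log (∫ ω, ρ ω ^ (-l) ∂μ) : ℝ) : EReal)))) =
      (((κℓ + κr) * h : ℝ) : EReal) :=
  stmt6_general μ ρ hpos p hp1 hintr hintl κℓ κr hκℓ hκr hmomr hmoml hderintr hderposr hderintl
    hderposl h hh
end
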